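/- Consider the sequence of 2×2 matrices over ℝ given by a quiddity sequence a_1, …, a_n: M(a) = [[a, −1],[1, 0]]. If the values p({i,j}) defined by the frieze recursion p({i,i}) = 0, p({i,i+1}) = 1, p({i,j+1}) = a_j·p({i,j}) − p({i,j−1}) satisfy the unimodular rule for all diamonds, then they satisfy the Plücker relation p({i,l})·p({j,m}) = p({i,j})·p({l,m}) + p({i,m})·p({j,l}) for all i < j < l < m. -/
import Mathlib


/-- the entries of a frieze generated by a quiddity sequence via
the recursion `p i (j+1) = a j * p i j - p i (j-1)`, assuming the unimodular
rule on all diamonds, satisfy all three-term Plücker relations. -/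
theorem stmt_10 (n : ℕ) (a : ℕ → ℝ) (p : ℕ → ℕ → ℝ)
    (h0 : ∀ i, p i i = 0)
    (h1 : ∀ i, p i (i + 1) = 1)
    (hrec : ∀ i j, i < j → p i (j + 1) = a j * p i j - p i (j - 1))
    (huni : ∀ i j, i < j →
      p i j * p (i + 1) (j + 1) = p i (j + 1) * p (i + 1) j + 1) :
    ∀ i j l m : ℕ, i < j → j < l → l < m →
      p i l * p j m = p i j * p l m + p i m * p j l := by
  -- Casoratian of the two solutions p i, p j is constant in l:
  have adj : ∀ i j : ℕ, i < j → ∀ l : ℕ, j ≤ l →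
      p i l * p j (l + 1) - p i (l + 1) * p j l = p i j := by
    intro i j hij l hl
    induction l, hl using Nat.le_induction with
    | base => rw [h0, h1]; ring
    | succ l hl ih =>
      have hi : i < l + 1 := by omega
      have hj : j < l + 1 := by omega
      have r1 := hrec i (l + 1) hi
      have r2 := hrec j (l + 1) hj
      simp only [Nat.add_sub_cancel] at r1 r2
      rw [r1, r2]
      linear_combination ih
  intro i j l m hij hjl hlm
  -- E m := p i l * p j m - p i m * p j l - p i j * p l m satisfies the same
  -- recursion in m; it vanishes at m = l and m = l + 1, hence everywhere.
  have key : ∀ m : ℕ, l ≤ m →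
      (p i l * p j m - p i m * p j l - p i j * p l m = 0) ∧
      (p i l * p j (m + 1) - p i (m + 1) * p j l - p i j * p l (m + 1) = 0) := by
    intro m hm
    induction m, hm using Nat.le_induction with
    | base =>
      constructor
      · rw [h0 l]; ring
      · have := adj i j hij l (le_of_lt hjl)
        rw [h1 l]; linarith
    | succ m hm ih =>
      refine ⟨ih.2, ?_⟩
      have hi : i < m + 1 := by omega
      have hj : j < m + 1 := by omega
      have hl' : l < m + 1 := by omega
      have r1 := hrec i (m + 1) hi
      have r2 := hrec j (m + 1) hj
      have r3 := hrec l (m + 1) hl'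
      simp only [Nat.add_sub_cancel] at r1 r2 r3
      rw [r1, r2, r3]
      linear_combination (a (m + 1)) * ih.2 - ih.1
  linarith [(key m (le_of_lt hlm)).1]
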